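/- Let (X, {R_0,...,R_d}) be a symmetric association scheme with Γ = (X, R_1) connected and H the unweighted distribution diagram of R_1; for i with d_H(0,i) = h define c(i) = Σ_{j : d_H(0,j) = h-1} p_{1j}^i. Let T be a disconnecting set for Γ and let x and z be vertices lying in different connected components of Γ \ T, with (x,z) ∈ R_i. Suppose there is some y ∈ T adjacent to z in Γ. If either x is proximal only to y, or x is proximal to y and z is proximal only to y (relative to T), then c(i) = 1. -/

import Mathlib

/-- A symmetric association scheme with `d` classes on a finite vertex set `X`:
a partition of `X × X` into nonempty symmetric relations `R 0, …, R d`, where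
`R 0` is the identity relation, together with intersection numbers `p i j k`. -/
structure SymAssocScheme (X : Type*) [Fintype X] (d : ℕ) where
  R : Fin (d + 1) → X → X → Prop
  R_nonempty : ∀ i, ∃ a b, R i a b
  R_symm : ∀ i a b, R i a b → R i b a
  R_zero : ∀ a b, R 0 a b ↔ a = b
  R_unique : ∀ a b, ∃! i, R i a b
  p : Fin (d + 1) → Fin (d + 1) → Fin (d + 1) → ℕ
  p_spec : ∀ (i j k : Fin (d + 1)) (a b : X), R k a b →
    {c : X | R i a c ∧ R j c b}.ncard = p i j k

namespace SymAssocScheme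

variable {X : Type*} [Fintype X] {d : ℕ}

/-- The (simple) graph `Γ = (X, R_i)` of the basis relation `R_i`. -/
def graph (A : SymAssocScheme X d) (i : Fin (d + 1)) : SimpleGraph X where
  Adj a b := a ≠ b ∧ A.R i a b
  symm := ⟨fun a b h => ⟨h.1.symm, A.R_symm i a b h.2⟩⟩
  loopless := ⟨fun a h => h.1 rfl⟩

/-- The unweighted distribution diagram `H_i` (with loops discarded):
`j ~ k` iff `p i j k + p i k j > 0`. -/
def diagram (A : SymAssocScheme X d) (i : Fin (d + 1)) : SimpleGraph (Fin (d + 1)) where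
  Adj j k := j ≠ k ∧ 0 < A.p i j k + A.p i k j
  symm := ⟨fun j k h => ⟨h.1.symm, by omega⟩⟩
  loopless := ⟨fun j h => h.1 rfl⟩

end SymAssocScheme

/-!
In a connected scheme graph `Γ = (X, R_1)` distances are read off the diagram:
`d_Γ(a, b) = d_H(0, r(a, b))` with `r(a, b)` the class of `(a, b)`, since a step in `Γ` moves
`r(a, ·)` along an edge of `H` or not at all, and every edge of `H` is realised by such a step.
Hence `c(i)` counts the neighbours `e` of `z` with `d(e, x) = d(z, x) - 1`. Either proximity
hypothesis makes `y` the unique vertex `t` of `T` minimising `d(z, t) + d(t, x)`. Prepending `z`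
to a geodesic from such an `e` to `x` gives a geodesic from `z` to `x`; it meets `T`, necessarily
in `y`, and then `e = y`.
-/

namespace SimpleGraph

variable {V : Type*} {G : SimpleGraph V}

theorem Walk.dist_add_dist_le_length {u v w : V} (p : G.Walk u v) (hw : w ∈ p.support) :
    G.dist u w + G.dist w v ≤ p.length := by
  classical
  rw [← p.take_spec hw, Walk.length_append]
  exact add_le_add (dist_le _) (dist_le _)

theorem Walk.exists_walk_length_le_of_adj {W : Type*} {G' : SimpleGraph W} {f : V → W}
    (hf : ∀ u v, G.Adj u v → f u = f v ∨ G'.Adj (f u) (f v)) :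
    ∀ {u v : V} (p : G.Walk u v), ∃ q : G'.Walk (f u) (f v), q.length ≤ p.length
  | _, _, .nil => ⟨.nil, le_rfl⟩
  | u, _, .cons (v := w) h p => by
    obtain ⟨q, hq⟩ := exists_walk_length_le_of_adj hf p
    rcases hf u w h with heq | hadj
    · exact ⟨q.copy heq.symm rfl, by simp; omega⟩
    · exact ⟨.cons hadj q, Nat.succ_le_succ hq⟩

theorem exists_mem_support_of_not_reachable_induce {s : Set V} {u v : V} (hu : u ∈ s)
    (hv : v ∈ s) (h : ¬(G.induce s).Reachable ⟨u, hu⟩ ⟨v, hv⟩) (p : G.Walk u v) :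
    ∃ t ∈ p.support, t ∉ s := by
  by_contra! hp
  exact h (p.induce s hp).reachable

theorem Reachable.exists_adj_dist_add_one_eq {u v : V} (huv : G.Reachable u v) (hne : u ≠ v) :
    ∃ w, G.Adj u w ∧ G.dist w v + 1 = G.dist u v := by
  obtain ⟨p, hp⟩ := huv.exists_walk_length_eq_dist
  cases p with
  | nil => exact absurd rfl hne
  | cons h q =>
    refine ⟨_, h, le_antisymm ?_ ?_⟩
    · simpa [← hp] using dist_le q
    · have := h.reachable.dist_triangle_left v
      rw [dist_eq_one_iff_adj.mpr h] at this
      omega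

section Detour

variable {T : Set V} {x y z : V}

theorem Connected.eq_of_mem_support_of_length_eq_dist (hconn : G.Connected)
    (hmin : ∀ t ∈ T, t ≠ y → G.dist z y + G.dist y x < G.dist z t + G.dist t x)
    {p : G.Walk z x} (hp : p.length = G.dist z x) {t : V} (ht : t ∈ p.support) (htT : t ∈ T) :
    t = y := by
  by_contra hty
  have := hmin t htT hty
  have := p.dist_add_dist_le_length ht
  have := hconn.dist_triangle (u := z) (v := y) (w := x)
  omega

theorem Connected.eq_of_adj_of_dist_add_one_eq (hconn : G.Connected)
    (hsep : ∀ p : G.Walk z x, ∃ t ∈ p.support, t ∈ T)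
    (hmin : ∀ t ∈ T, t ≠ y → G.dist z y + G.dist y x < G.dist z t + G.dist t x)
    (hzy : G.Adj z y) {e : V} (hze : G.Adj z e) (he : G.dist e x + 1 = G.dist z x) : e = y := by
  obtain ⟨p, hp⟩ := hconn.exists_walk_length_eq_dist e x
  obtain ⟨t, ht, htT⟩ := hsep (.cons hze p)
  obtain rfl : t = y :=
    hconn.eq_of_mem_support_of_length_eq_dist hmin (by rw [Walk.length_cons, hp, he]) ht htT
  have htp : t ∈ p.support := by
    rw [Walk.support_cons, List.mem_cons] at ht
    exact ht.resolve_left hzy.ne'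
  have het := p.dist_add_dist_le_length htp
  have hzx := hconn.dist_triangle (u := z) (v := t) (w := x)
  rw [dist_eq_one_iff_adj.mpr hzy] at hzx
  exact (hconn.dist_eq_zero_iff).mp (by omega)

theorem Connected.setOf_adj_dist_add_one_eq_eq_singleton (hconn : G.Connected)
    (hsep : ∀ p : G.Walk z x, ∃ t ∈ p.support, t ∈ T)
    (hmin : ∀ t ∈ T, t ≠ y → G.dist z y + G.dist y x < G.dist z t + G.dist t x)
    (hzy : G.Adj z y) :
    {e | G.Adj z e ∧ G.dist e x + 1 = G.dist z x} = {y} := by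
  have hzx : z ≠ x := by
    rintro rfl
    obtain ⟨t, ht, htT⟩ := hsep .nil
    have := hconn.eq_of_mem_support_of_length_eq_dist hmin (by simp) ht htT
    rw [Walk.support_nil, List.mem_singleton] at ht
    exact hzy.ne (ht ▸ this)
  obtain ⟨e, hze, he⟩ := (hconn z x).exists_adj_dist_add_one_eq hzx
  have hey := hconn.eq_of_adj_of_dist_add_one_eq hsep hmin hzy hze he
  ext w
  refine ⟨fun ⟨hzw, hw⟩ ↦ hconn.eq_of_adj_of_dist_add_one_eq hsep hmin hzy hzw hw, ?_⟩
  rintro rfl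
  exact ⟨hzy, hey ▸ he⟩

end Detour

end SimpleGraph

namespace SymAssocScheme

variable {X : Type*} [Fintype X] {d : ℕ} (A : SymAssocScheme X d)

noncomputable def relIndex (a b : X) : Fin (d + 1) :=
  (A.R_unique a b).choose

theorem relIndex_eq_iff {i : Fin (d + 1)} {a b : X} : A.relIndex a b = i ↔ A.R i a b :=
  ⟨fun h ↦ h ▸ (A.R_unique a b).choose_spec.1,
    fun h ↦ ((A.R_unique a b).choose_spec.2 i h).symm⟩

theorem R_relIndex (a b : X) : A.R (A.relIndex a b) a b :=
  A.relIndex_eq_iff.mp rfl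

theorem relIndex_self (a : X) : A.relIndex a a = 0 :=
  A.relIndex_eq_iff.mpr ((A.R_zero a a).mpr rfl)

theorem p_pos_iff {i j k : Fin (d + 1)} {a b : X} (hk : A.R k a b) :
    0 < A.p i j k ↔ ∃ c, A.R i a c ∧ A.R j c b := by
  rw [← A.p_spec i j k a b hk, Set.ncard_pos (Set.toFinite _)]
  rfl

theorem p_pos_comm {i j k : Fin (d + 1)} (h : 0 < A.p i j k) : 0 < A.p i k j := by
  obtain ⟨a, b, hab⟩ := A.R_nonempty k
  obtain ⟨c, hac, hcb⟩ := (A.p_pos_iff hab).mp h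
  exact (A.p_pos_iff hcb).mpr ⟨a, A.R_symm i a c hac, hab⟩

theorem diagram_adj_iff {i j k : Fin (d + 1)} :
    (A.diagram i).Adj j k ↔ j ≠ k ∧ 0 < A.p i j k := by
  have hcomm := A.p_pos_comm (i := i) (j := k) (k := j)
  show j ≠ k ∧ 0 < A.p i j k + A.p i k j ↔ _
  exact and_congr_right fun _ ↦
    ⟨fun h ↦ (Nat.eq_zero_or_pos _).elim (fun h0 ↦ hcomm (by omega)) id, fun h ↦ by omega⟩

theorem relIndex_eq_or_diagram_adj {i : Fin (d + 1)} (a : X) {b c : X} (hbc : A.R i b c) :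
    A.relIndex a b = A.relIndex a c ∨ (A.diagram i).Adj (A.relIndex a b) (A.relIndex a c) := by
  refine or_iff_not_imp_left.mpr fun hne ↦ A.diagram_adj_iff.mpr ⟨hne, ?_⟩
  exact (A.p_pos_iff (A.R_symm _ a c (A.R_relIndex a c))).mpr
    ⟨b, A.R_symm i b c hbc, A.R_symm _ a b (A.R_relIndex a b)⟩

theorem exists_diagram_walk {i : Fin (d + 1)} {a b : X} (p : (A.graph i).Walk a b) :
    ∃ q : (A.diagram i).Walk 0 (A.relIndex a b), q.length ≤ p.length := by
  have := p.exists_walk_length_le_of_adj (G := A.graph i) (G' := A.diagram i) (f := A.relIndex a)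
    fun _ _ h ↦ A.relIndex_eq_or_diagram_adj a h.2
  rwa [A.relIndex_self] at this

theorem exists_graph_walk {i j k : Fin (d + 1)} (q : (A.diagram i).Walk j k) {a b : X}
    (hab : A.R j a b) : ∃ c, A.R k c b ∧ ∃ p : (A.graph i).Walk a c, p.length ≤ q.length := by
  induction q generalizing a with
  | nil => exact ⟨a, hab, .nil, le_rfl⟩
  | @cons j j' k hjj' q ih =>
    obtain ⟨e, hae, heb⟩ :=
      (A.p_pos_iff hab).mp (A.diagram_adj_iff.mp hjj'.symm).2
    obtain ⟨c, hcb, p, hp⟩ := ih heb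
    refine ⟨c, hcb, ?_⟩
    by_cases hae' : a = e
    · exact ⟨p.copy hae'.symm rfl, by simp; omega⟩
    · exact ⟨.cons ⟨hae', hae⟩ p, Nat.succ_le_succ hp⟩

theorem graph_dist_eq_diagram_dist {i : Fin (d + 1)} (hconn : (A.graph i).Connected) (a b : X) :
    (A.graph i).dist a b = (A.diagram i).dist 0 (A.relIndex a b) := by
  obtain ⟨p, hp⟩ := hconn.exists_walk_length_eq_dist a b
  obtain ⟨q, hq⟩ := A.exists_diagram_walk p
  obtain ⟨q', hq'⟩ := q.reachable.symm.exists_walk_length_eq_dist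
  obtain ⟨c, hcb, p', hp'⟩ := A.exists_graph_walk q' (A.R_relIndex a b)
  obtain rfl := (A.R_zero c b).mp hcb
  refine le_antisymm ?_ ?_
  · rw [SimpleGraph.dist_comm (u := 0)]
    exact (SimpleGraph.dist_le p').trans (hp'.trans hq'.le)
  · exact (SimpleGraph.dist_le q).trans (hp ▸ hq)

theorem sum_p_eq_ncard {i k : Fin (d + 1)} {a b : X} (hk : A.R k a b) (s : Finset (Fin (d + 1))) :
    ∑ j ∈ s, A.p i j k = {c | A.R i a c ∧ A.relIndex c b ∈ s}.ncard := by
  classical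
  have hfiber (j : Fin (d + 1)) :
      A.p i j k = (Finset.univ.filter fun c ↦ A.R i a c ∧ A.relIndex c b = j).card := by
    rw [← A.p_spec i j k a b hk, ← Set.ncard_coe_finset]
    simp [A.relIndex_eq_iff]
  have hS : {c | A.R i a c ∧ A.relIndex c b ∈ s} =
      ↑(Finset.univ.filter fun c ↦ A.R i a c ∧ A.relIndex c b ∈ s) := by
    ext
    simp
  rw [hS, Set.ncard_coe_finset, Finset.card_eq_sum_card_fiberwise (f := fun c ↦ A.relIndex c b)
    (t := s) fun c hc ↦ (Finset.mem_filter.mp hc).2.2]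
  refine Finset.sum_congr rfl fun j hj ↦ ?_
  rw [hfiber, Finset.filter_filter]
  congr 1
  refine Finset.filter_congr fun c _ ↦ ⟨?_, fun ⟨⟨hac, _⟩, hcb⟩ ↦ ⟨hac, hcb⟩⟩
  rintro ⟨hac, rfl⟩
  exact ⟨⟨hac, hj⟩, rfl⟩

theorem sum_p_filter_diagram_dist_eq_ncard {i k : Fin (d + 1)} (hconn : (A.graph i).Connected)
    {a b : X} (hk : A.R k a b) :
    ∑ j ∈ Finset.univ.filter
        (fun j ↦ (A.diagram i).dist 0 j + 1 = (A.diagram i).dist 0 k), A.p i j k =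
      {c | (A.graph i).Adj a c ∧ (A.graph i).dist c b + 1 = (A.graph i).dist a b}.ncard := by
  rw [A.sum_p_eq_ncard hk]
  congr 1
  ext c
  simp only [Set.mem_ofPred_eq, Finset.mem_filter, Finset.mem_univ, true_and,
    ← A.graph_dist_eq_diagram_dist hconn, ← (A.relIndex_eq_iff).mpr hk]
  refine ⟨fun ⟨hac, hc⟩ ↦ ⟨⟨?_, hac⟩, hc⟩, fun ⟨hac, hc⟩ ↦ ⟨hac.2, hc⟩⟩
  rintro rfl
  omega

end SymAssocScheme

open SymAssocScheme in
theorem c_eq_one_of_proximal_general {X : Type*} [Fintype X] {d : ℕ}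
    (A : SymAssocScheme X d) (hconn : (A.graph 1).Connected)
    (c : Fin (d + 1) → ℕ)
    (hc : ∀ i : Fin (d + 1), c i = ∑ j ∈ Finset.univ.filter
        (fun j : Fin (d + 1) =>
          (A.diagram 1).dist 0 j + 1 = (A.diagram 1).dist 0 i), A.p 1 j i)
    (T : Set X)
    (x z : X) (hx : x ∈ Tᶜ) (hz : z ∈ Tᶜ)
    (hsep : ¬ ((A.graph 1).induce Tᶜ).Reachable ⟨x, hx⟩ ⟨z, hz⟩)
    (i : Fin (d + 1)) (hi : A.R i x z)
    (y : X) (hyz : (A.graph 1).Adj z y)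
    (hprox :
      (∀ y' ∈ T, y' ≠ y → (A.graph 1).dist x y < (A.graph 1).dist x y') ∨
      ((∀ y' ∈ T, (A.graph 1).dist x y ≤ (A.graph 1).dist x y') ∧
        ∀ y' ∈ T, y' ≠ y → (A.graph 1).dist z y < (A.graph 1).dist z y')) :
    c i = 1 := by
  set Γ := A.graph 1
  have hwalk (p : Γ.Walk z x) : ∃ t ∈ p.support, t ∈ T := by
    simpa using SimpleGraph.exists_mem_support_of_not_reachable_induce hz hx
      (fun h ↦ hsep h.symm) p
  have hmin (t : X) (ht : t ∈ T) (hty : t ≠ y) :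
      Γ.dist z y + Γ.dist y x < Γ.dist z t + Γ.dist t x := by
    rw [SimpleGraph.dist_eq_one_iff_adj.mpr hyz, SimpleGraph.dist_comm (u := y),
      SimpleGraph.dist_comm (u := t)]
    rcases hprox with hxy | ⟨hxy, hzy⟩
    · have := hxy t ht hty
      have : 0 < Γ.dist z t := hconn.pos_dist_of_ne (by rintro rfl; exact hz ht)
      omega
    · have := hxy t ht
      have := hzy t ht hty
      rw [SimpleGraph.dist_eq_one_iff_adj.mpr hyz] at this
      omega
  rw [hc, A.sum_p_filter_diagram_dist_eq_ncard hconn (A.R_symm i x z hi),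
    hconn.setOf_adj_dist_add_one_eq_eq_singleton hwalk hmin hyz, Set.ncard_singleton]

open SymAssocScheme in
/-- Proposition 5.5: with `Γ = (X, R_1)` connected and
`c i = ∑_{j : d_H(0,j)+1 = d_H(0,i)} p_{1j}^i`, let `T` be a disconnecting set for
`Γ`, let `x` and `z` lie in distinct components of `Γ \ T` with `(x,z) ∈ R_i`, and
let `y ∈ T` be adjacent to `z`. If either `x` is proximal only to `y`, or `x` is
proximal to `y` and `z` is proximal only to `y` (relative to `T`), then `c i = 1`. -/
theorem c_eq_one_of_proximal {X : Type*} [Fintype X] {d : ℕ} (hd : 0 < d)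
    (A : SymAssocScheme X d) (hconn : (A.graph 1).Connected)
    (c : Fin (d + 1) → ℕ)
    (hc : ∀ i : Fin (d + 1), c i = ∑ j ∈ Finset.univ.filter
        (fun j : Fin (d + 1) =>
          (A.diagram 1).dist 0 j + 1 = (A.diagram 1).dist 0 i), A.p 1 j i)
    (T : Set X) (hT : ¬ ((A.graph 1).induce Tᶜ).Connected)
    (x z : X) (hx : x ∈ Tᶜ) (hz : z ∈ Tᶜ)
    (hsep : ¬ ((A.graph 1).induce Tᶜ).Reachable ⟨x, hx⟩ ⟨z, hz⟩)
    (i : Fin (d + 1)) (hi : A.R i x z)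
    (y : X) (hy : y ∈ T) (hyz : (A.graph 1).Adj z y)
    (hprox :
      (∀ y' ∈ T, y' ≠ y → (A.graph 1).dist x y < (A.graph 1).dist x y') ∨
      ((∀ y' ∈ T, (A.graph 1).dist x y ≤ (A.graph 1).dist x y') ∧
        ∀ y' ∈ T, y' ≠ y → (A.graph 1).dist z y < (A.graph 1).dist z y')) :
    c i = 1 :=
  c_eq_one_of_proximal_general A hconn c hc T x z hx hz hsep i hi y hyz hprox
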